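/- arXiv:math/0208132 — 3 statements merged into one kernel-verified Lean document; each statement's English description precedes it below -/
import Mathlib

section
/- Let X be a Delone set in ℝ^d with packing radius r(X), and suppose X is linearly repetitive with constant C_LR, i.e., M_X(T) ≤ C_LR · T for all T ≥ 1. Suppose there exist x, y ∈ X with x ≠ y, T > 1, such that (X − x) ∩ B(0,T) = (X − y) ∩ B(0,T) and r(X) ≤ ‖x − y‖ ≤ T / ((C_LR + 1)(r(X)^{-1} + 1)). Then X is periodic; more precisely X + (y − x) = X. -/
open Metric

/-- `X` is a Delone set in `ℝ^d` with packing radius `r` and covering radius `R`: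
every closed ball of radius `r` meets at most one point of `X` and every closed
ball of radius `R` meets at least one point of `X`. -/
def IsDelone {d : ℕ} (X : Set (EuclideanSpace ℝ (Fin d))) (r R : ℝ) : Prop :=
  0 < r ∧ 0 < R ∧ (∀ p, (X ∩ closedBall p r).Subsingleton) ∧
    (∀ p, (X ∩ closedBall p R).Nonempty)

/-- The `T`-patch of `X` centered at `x`: `(X - x) ∩ B(0,T)`. -/
def patch {d : ℕ} (X : Set (EuclideanSpace ℝ (Fin d)))
    (x : EuclideanSpace ℝ (Fin d)) (T : ℝ) : Set (EuclideanSpace ℝ (Fin d)) :=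
  ((fun z => z - x) '' X) ∩ closedBall 0 T

/-- `M` is a repetitivity bound for `X` at scale `T` (i.e. `M_X(T) ≤ M`):
every closed ball of radius `M` contains the center of a translate of
every `T`-patch of `X`. -/
def RepBound {d : ℕ} (X : Set (EuclideanSpace ℝ (Fin d))) (T M : ℝ) : Prop :=
  ∀ p : EuclideanSpace ℝ (Fin d), ∀ x ∈ X, ∃ y ∈ X,
    y ∈ closedBall p M ∧ patch X y T = patch X x T

/-- The number `N_X(T)` of distinct `T`-patches of `X` up to translation. -/
noncomputable def patchCount {d : ℕ} (X : Set (EuclideanSpace ℝ (Fin d))) (T : ℝ) : ℕ :=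
  {P | ∃ x ∈ X, P = patch X x T}.ncard

lemma mem_patch_iff {d : ℕ} {X : Set (EuclideanSpace ℝ (Fin d))}
    {x u : EuclideanSpace ℝ (Fin d)} {T : ℝ} :
    u ∈ patch X x T ↔ x + u ∈ X ∧ ‖u‖ ≤ T := by
  simp only [patch, Set.mem_inter_iff, Set.mem_image, mem_closedBall,
    dist_zero_right]
  constructor
  · rintro ⟨⟨w, hw, rfl⟩, h2⟩
    refine ⟨?_, h2⟩
    simpa using hw
  · rintro ⟨h1, h2⟩
    exact ⟨⟨x + u, h1, by abel⟩, h2⟩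

theorem stmt1 {d : ℕ} (X : Set (EuclideanSpace ℝ (Fin d))) (r R C : ℝ)
    (hX : IsDelone X r R)
    (hLR : ∀ T ≥ (1:ℝ), RepBound X T (C * T))
    (x y : EuclideanSpace ℝ (Fin d)) (hx : x ∈ X) (hy : y ∈ X) (hxy : x ≠ y)
    (T : ℝ) (hT : 1 < T)
    (hpatch : patch X x T = patch X y T)
    (hlow : r ≤ ‖x - y‖)
    (hup : ‖x - y‖ ≤ T / ((C + 1) * (r⁻¹ + 1))) :
    (fun z => z + (y - x)) '' X = X := by
  obtain ⟨hr, -, -, -⟩ := hX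
  set v := y - x with hv
  set δ := ‖x - y‖ with hδ
  have hδv : ‖v‖ = δ := norm_sub_rev y x
  have hδpos : 0 < δ := lt_of_lt_of_le hr hlow
  -- C ≥ 0
  have hC : 0 ≤ C := by
    by_contra hC
    push_neg at hC
    obtain ⟨z, -, hz, -⟩ := hLR 1 le_rfl x x hx
    have : (closedBall x (C * 1)).Nonempty := ⟨z, hz⟩
    rw [nonempty_closedBall] at this
    nlinarith
  -- the denominator is positive
  have hK : 0 < (C + 1) * (r⁻¹ + 1) := by positivity
  have hupT : δ * ((C + 1) * (r⁻¹ + 1)) ≤ T := by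
    rw [← le_div_iff₀ hK]; exact hup
  have hrinv : 1 ≤ δ * r⁻¹ := by
    rw [← div_eq_mul_inv]; exact (one_le_div hr).mpr hlow
  -- the scale S
  set S := max 1 δ with hS
  have hS1 : (1:ℝ) ≤ S := le_max_left _ _
  have hSδ : δ ≤ S := le_max_right _ _
  have hmain : C * S + δ ≤ T := by
    have hS' : S ≤ 1 + δ := max_le (by linarith) (by linarith)
    nlinarith
  -- local period on the ball of radius T - δ around x
  have Per : ∀ w ∈ X, ‖w - x‖ ≤ T - δ → (w + v ∈ X ∧ w - v ∈ X) := by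
    intro w hw hwx
    constructor
    · have h1 : (w - x) ∈ patch X x T :=
        mem_patch_iff.mpr ⟨by simpa using hw, by linarith⟩
      rw [hpatch] at h1
      have := (mem_patch_iff.mp h1).1
      have he : y + (w - x) = w + v := by rw [hv]; abel
      rwa [he] at this
    · have h1 : (w - y) ∈ patch X y T := by
        refine mem_patch_iff.mpr ⟨by simpa using hw, ?_⟩
        have : ‖w - y‖ ≤ ‖w - x‖ + ‖x - y‖ := by
          simpa using norm_sub_le_norm_sub_add_norm_sub w x y
        linarith
      rw [← hpatch] at h1
      have := (mem_patch_iff.mp h1).1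
      have he : x + (w - y) = w - v := by rw [hv]; abel
      rwa [he] at this
  -- global period
  have glob : ∀ w ∈ X, w + v ∈ X ∧ w - v ∈ X := by
    intro w hw
    obtain ⟨z, hzX, hzball, hzpatch⟩ := hLR S hS1 x w hw
    rw [mem_closedBall, dist_eq_norm] at hzball
    have hzx : ‖z - x‖ ≤ T - δ := by
      have : C * S ≤ T - δ := by linarith
      linarith [hzball, mul_le_mul_of_nonneg_left hS1 hC]
    obtain ⟨hz1, hz2⟩ := Per z hzX hzx
    constructor
    · have h1 : v ∈ patch X z S :=
        mem_patch_iff.mpr ⟨hz1, by rw [hδv]; exact hSδ⟩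
      rw [hzpatch] at h1
      exact (mem_patch_iff.mp h1).1
    · have h1 : -v ∈ patch X z S := by
        refine mem_patch_iff.mpr ⟨?_, by rw [norm_neg, hδv]; exact hSδ⟩
        have he : z + -v = z - v := by abel
        rwa [he]
      rw [hzpatch] at h1
      have := (mem_patch_iff.mp h1).1
      have he : w + -v = w - v := by abel
      rwa [he] at this
  ext w
  simp only [Set.mem_image]
  constructor
  · rintro ⟨a, ha, rfl⟩
    exact (glob a ha).1
  · intro hw
    exact ⟨w - v, (glob w hw).2, by abel⟩
end

section
/- Let X be a non-periodic linearly repetitive Delone set in ℝ^d. Then there exists a constant κ(X) > 0 such that whenever x, y ∈ X with x ≠ y and (X − x) ∩ B(0,T) = (X − y) ∩ B(0,T) for some T > 1, one has ‖x − y‖ ≥ κ(X) · T. -/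
open Metric

lemma mem_patch {d : ℕ} {X : Set (EuclideanSpace ℝ (Fin d))}
    {x v : EuclideanSpace ℝ (Fin d)} {T : ℝ} :
    v ∈ patch X x T ↔ x + v ∈ X ∧ ‖v‖ ≤ T := by
  simp only [patch, Set.mem_inter_iff, Set.mem_image, mem_closedBall, dist_zero_right]
  constructor
  · rintro ⟨⟨w, hw, rfl⟩, h⟩
    refine ⟨by simpa using hw, h⟩
  · rintro ⟨h1, h2⟩
    exact ⟨⟨x + v, h1, by abel⟩, h2⟩

theorem stmt2 {d : ℕ} (X : Set (EuclideanSpace ℝ (Fin d))) (r R : ℝ)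
    (hX : IsDelone X r R)
    (hLR : ∃ C : ℝ, ∀ T ≥ (1:ℝ), RepBound X T (C * T))
    (hnp : ∀ t : EuclideanSpace ℝ (Fin d), t ≠ 0 → (fun z => z + t) '' X ≠ X) :
    ∃ κ > (0:ℝ), ∀ x ∈ X, ∀ y ∈ X, x ≠ y → ∀ T : ℝ, 1 < T →
      patch X x T = patch X y T → κ * T ≤ ‖x - y‖ := by
  obtain ⟨hr, hR, hpack, hcov⟩ := hX
  obtain ⟨C, hC⟩ := hLR
  set C' : ℝ := max C 1 with hC'def
  have hC1 : (1:ℝ) ≤ C' := le_max_right _ _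
  have hC0 : (0:ℝ) < C' := lt_of_lt_of_le one_pos hC1
  set κ : ℝ := min (r / (2*C')) (1/(2*(C'+1))) with hκdef
  have hκpos : 0 < κ := lt_min (by positivity) (by positivity)
  refine ⟨κ, hκpos, ?_⟩
  intro x hx y hy hxy T hT hpatch
  by_contra hcon
  push_neg at hcon
  set t : EuclideanSpace ℝ (Fin d) := y - x with htdef
  have ht0 : t ≠ 0 := sub_ne_zero.mpr (Ne.symm hxy)
  have hTpos : (0:ℝ) < T := lt_trans one_pos hT
  have ht : ‖t‖ < κ * T := by
    rw [htdef, norm_sub_rev]; exact hcon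
  have hκ1 : κ ≤ r / (2*C') := min_le_left _ _
  have hκ2 : κ ≤ 1/(2*(C'+1)) := min_le_right _ _
  have hκ2' : κ * (2*(C'+1)) ≤ 1 := by
    rw [← le_div_iff₀ (by positivity)] ; exact hκ2
  -- ‖t‖ < T/2
  have htT : ‖t‖ < T / 2 := by nlinarith [norm_nonneg t, ht, hκ2', hC0, hTpos]
  -- small T case: T ≤ 2*C' gives ‖t‖ < r, contradicting packing
  rcases le_or_gt T (2*C') with hT2 | hT2
  · have h1 : ‖t‖ < r := by
      have : κ * T ≤ κ * (2*C') := by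
        exact mul_le_mul_of_nonneg_left hT2 (le_of_lt hκpos)
      have h2 : κ * (2*C') ≤ r := by
        have := mul_le_mul_of_nonneg_right hκ1 (by positivity : (0:ℝ) ≤ 2*C')
        calc κ * (2*C') ≤ r / (2*C') * (2*C') := this
          _ = r := by field_simp
      linarith [ht]
    have hyx : y ∈ closedBall x r := by
      rw [mem_closedBall, dist_eq_norm]
      exact le_of_lt h1
    have := hpack x ⟨hy, hyx⟩ ⟨hx, mem_closedBall_self (le_of_lt hr)⟩
    exact hxy this.symm
  · -- big T case : build a global period t
    -- local period on B(x, T - ‖t‖)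
    have hlocal : ∀ u ∈ X, ‖u - x‖ ≤ T - ‖t‖ → (u + t ∈ X ∧ u - t ∈ X) := by
      intro u hu hud
      have htn : (0:ℝ) ≤ ‖t‖ := norm_nonneg t
      constructor
      · have h1 : u - x ∈ patch X x T := mem_patch.mpr ⟨by simpa using hu, by linarith⟩
        rw [hpatch] at h1
        have := (mem_patch.mp h1).1
        have he : y + (u - x) = u + t := by rw [htdef]; abel
        rwa [he] at this
      · have h1 : u - x - t ∈ patch X y T := by
          refine mem_patch.mpr ⟨?_, ?_⟩
          · have he : y + (u - x - t) = u := by rw [htdef]; abel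
            rwa [he]
          · calc ‖u - x - t‖ ≤ ‖u - x‖ + ‖t‖ := norm_sub_le _ _
              _ ≤ T := by linarith
        rw [← hpatch] at h1
        have := (mem_patch.mp h1).1
        have he : x + (u - x - t) = u - t := by abel
        rwa [he] at this
    -- global period
    have hglobal : ∀ u ∈ X, u + t ∈ X ∧ u - t ∈ X := by
      intro u hu
      set S : ℝ := max 1 ‖t‖ with hSdef
      have hS1 : (1:ℝ) ≤ S := le_max_left _ _
      have hSt : ‖t‖ ≤ S := le_max_right _ _
      obtain ⟨z, hz, hzball, hzpatch⟩ := hC S hS1 x u hu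
      have hzx : ‖z - x‖ ≤ T - ‖t‖ := by
        have h1 : ‖z - x‖ ≤ C * S := by
          rw [mem_closedBall, dist_eq_norm] at hzball; exact hzball
        have h2 : C * S ≤ C' * S := by
          exact mul_le_mul_of_nonneg_right (le_max_left _ _) (by linarith)
        have h3 : C' * S ≤ T - ‖t‖ := by
          rcases le_total 1 ‖t‖ with hc | hc
          · rw [hSdef, max_eq_right hc]
            nlinarith [ht, hκ2', hC0, hTpos, norm_nonneg t]
          · rw [hSdef, max_eq_left hc]
            nlinarith [htT, hT2, hC0]
        linarith
      obtain ⟨hzp, hzm⟩ := hlocal z hz hzx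
      constructor
      · have h1 : t ∈ patch X z S := mem_patch.mpr ⟨hzp, hSt⟩
        rw [hzpatch] at h1
        exact (mem_patch.mp h1).1
      · have h1 : -t ∈ patch X z S := by
          refine mem_patch.mpr ⟨?_, by simpa using hSt⟩
          have he : z + -t = z - t := by abel
          rwa [he]
        rw [hzpatch] at h1
        have := (mem_patch.mp h1).1
        have he : u + -t = u - t := by abel
        rwa [he] at this
    refine hnp t ht0 ?_
    ext w
    constructor
    · rintro ⟨w', hw', rfl⟩
      exact (hglobal w' hw').1
    · intro hw
      exact ⟨w - t, (hglobal w hw).2, sub_add_cancel w t⟩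
end

section
/- Let X be a non-periodic linearly repetitive Delone set in ℝ^d. Then there exist constants λ > 0 and T₀ > 0 such that the patch-counting function satisfies N_X(T) ≥ λ · T^d for all T ≥ T₀. In particular, liminf_{T→∞} N_X(T)/T^d > 0. -/
open Metric

/- ### Auxiliary lemmas -/

lemma aux_mem_patch {d : ℕ} {X : Set (EuclideanSpace ℝ (Fin d))}
    {x z : EuclideanSpace ℝ (Fin d)} {T : ℝ} :
    z ∈ patch X x T ↔ z + x ∈ X ∧ ‖z‖ ≤ T := by
  constructor
  · rintro ⟨⟨w, hw, rfl⟩, hz⟩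
    refine ⟨by simpa using hw, by simpa using mem_closedBall_zero_iff.1 hz⟩
  · rintro ⟨h1, h2⟩
    exact ⟨⟨z + x, h1, add_sub_cancel_right z x⟩, mem_closedBall_zero_iff.2 h2⟩

lemma aux_coord_dist_le {d : ℕ} (a b : EuclideanSpace ℝ (Fin d)) (i : Fin d) :
    dist (a i) (b i) ≤ dist a b := by
  rw [EuclideanSpace.dist_eq]
  have h1 : dist (a i) (b i) ^ 2 ≤ ∑ j, dist (a j) (b j) ^ 2 :=
    Finset.single_le_sum (f := fun j => dist (a j) (b j) ^ 2)
      (fun j _ => sq_nonneg _) (Finset.mem_univ i)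
  calc dist (a i) (b i) = Real.sqrt (dist (a i) (b i) ^ 2) := (Real.sqrt_sq dist_nonneg).symm
  _ ≤ _ := Real.sqrt_le_sqrt h1

/-- If two patches agree, the difference vector shifts `X` into itself near `x`. -/
lemma aux_shift {d : ℕ} {X : Set (EuclideanSpace ℝ (Fin d))}
    {x y : EuclideanSpace ℝ (Fin d)} {T : ℝ}
    (h : patch X x T = patch X y T) {u : EuclideanSpace ℝ (Fin d)}
    (hu : u ∈ X) (hd : ‖u - x‖ ≤ T) : u + (y - x) ∈ X := by
  have h1 : u - x ∈ patch X x T := aux_mem_patch.2 ⟨by simpa using hu, hd⟩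
  rw [h] at h1
  have h2 := (aux_mem_patch.1 h1).1
  have h3 : u - x + y = u + (y - x) := by abel
  rwa [h3] at h2

/-- Globalization: a local period on a large enough ball is a global period. -/
lemma aux_globalize {d : ℕ} {X : Set (EuclideanSpace ℝ (Fin d))} {C : ℝ}
    (hC : ∀ T ≥ (1:ℝ), RepBound X T (C * T)) {ρ S : ℝ} (hρ : 1 ≤ ρ)
    {t z₀ : EuclideanSpace ℝ (Fin d)} (ht : ‖t‖ ≤ ρ) (hS : (C + 1) * ρ ≤ S)
    (hper : ∀ v ∈ X, dist v z₀ ≤ S → v + t ∈ X) :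
    ∀ u ∈ X, u + t ∈ X := by
  intro u hu
  obtain ⟨y, hyX, hyb, hp⟩ := hC ρ hρ z₀ u hu
  have hyz : dist y z₀ ≤ S := by
    have h := mem_closedBall.1 hyb
    nlinarith
  have hyt : y + t ∈ X := hper y hyX hyz
  have h1 : t ∈ patch X y ρ := aux_mem_patch.2 ⟨by rwa [add_comm], ht⟩
  rw [hp] at h1
  have h2 := (aux_mem_patch.1 h1).1
  rwa [add_comm] at h2

/-- In a non-periodic setting, two points close to the origin with equal
`T`-patches must coincide. -/
lemma aux_patch_inj {d : ℕ} {X : Set (EuclideanSpace ℝ (Fin d))} {C : ℝ}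
    (hC : ∀ T ≥ (1:ℝ), RepBound X T (C * T)) (hC0 : 0 ≤ C)
    (hnp : ∀ t : EuclideanSpace ℝ (Fin d), t ≠ 0 → (fun z => z + t) '' X ≠ X)
    {T : ℝ} (hT : C + 2 ≤ T) {x y : EuclideanSpace ℝ (Fin d)}
    (hx : x ∈ X) (hy : y ∈ X)
    (hxn : ‖x‖ ≤ T / (2 * (C + 2))) (hyn : ‖y‖ ≤ T / (2 * (C + 2)))
    (hpatch : patch X x T = patch X y T) : x = y := by
  by_contra hne
  have hC2 : (0:ℝ) < C + 2 := by linarith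
  have hT0 : (0:ℝ) < T := by linarith
  have ht0 : y - x ≠ 0 := sub_ne_zero.2 (Ne.symm hne)
  have hρ : 1 ≤ T / (C + 2) := (le_div_iff₀ hC2).2 (by linarith)
  have hsum : T / (2 * (C + 2)) + T / (2 * (C + 2)) = T / (C + 2) := by
    field_simp
    ring
  have htn : ‖y - x‖ ≤ T / (C + 2) := by
    have h := norm_sub_le y x
    linarith
  have htn' : ‖x - y‖ ≤ T / (C + 2) := by rwa [norm_sub_rev]
  have hS : (C + 1) * (T / (C + 2)) ≤ T := by
    rw [← mul_div_assoc, div_le_iff₀ hC2]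
    nlinarith
  have hplus : ∀ u ∈ X, u + (y - x) ∈ X := by
    refine aux_globalize hC hρ htn hS (z₀ := x) ?_
    intro v hv hd
    exact aux_shift hpatch hv (by rw [← dist_eq_norm]; exact hd)
  have hminus : ∀ u ∈ X, u + (x - y) ∈ X := by
    refine aux_globalize hC hρ htn' hS (z₀ := y) ?_
    intro v hv hd
    exact aux_shift hpatch.symm hv (by rw [← dist_eq_norm]; exact hd)
  refine hnp (y - x) ht0 ?_
  ext z
  simp only [Set.mem_image]
  constructor
  · rintro ⟨w, hw, rfl⟩
    exact hplus w hw
  · intro hz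
    exact ⟨z + (x - y), hminus z hz, by abel⟩

/-- Counting bound: a packing-separated set inside a ball is finite, with an
explicit cardinality bound. -/
lemma aux_count {d : ℕ} {X : Set (EuclideanSpace ℝ (Fin d))} {r : ℝ} (hr : 0 < r)
    (hpack : ∀ p, (X ∩ closedBall p r).Subsingleton) (s : ℝ) :
    (X ∩ closedBall 0 s).Finite ∧
      (X ∩ closedBall 0 s).ncard ≤ (2 * ⌈s * ((d:ℝ) + 1) / r⌉ + 1).toNat ^ d := by
  classical
  set c : ℝ := r / ((d:ℝ) + 1) with hc
  have hd1 : (0:ℝ) < (d:ℝ) + 1 := by positivity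
  have hcpos : 0 < c := by positivity
  set A : ℤ := ⌈s * ((d:ℝ) + 1) / r⌉ with hA
  have hAeq : (A : ℤ) = ⌈s / c⌉ := by
    rw [hA, hc]
    congr 1
    rw [div_div_eq_mul_div]
  set φ : EuclideanSpace ℝ (Fin d) → (Fin d → ℤ) := fun x i => ⌈x i / c⌉ with hφ
  have hinj : Set.InjOn φ (X ∩ closedBall 0 s) := by
    intro x hxm y hym hxy
    have key : ∀ i, dist (x i) (y i) ≤ c := by
      intro i
      have heq : ⌈x i / c⌉ = ⌈y i / c⌉ := congrFun hxy i
      have h1 : x i / c ≤ ((⌈x i / c⌉ : ℤ) : ℝ) := Int.le_ceil _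
      have h2 : ((⌈y i / c⌉ : ℤ) : ℝ) < y i / c + 1 := Int.ceil_lt_add_one _
      have h3 : y i / c ≤ ((⌈y i / c⌉ : ℤ) : ℝ) := Int.le_ceil _
      have h4 : ((⌈x i / c⌉ : ℤ) : ℝ) < x i / c + 1 := Int.ceil_lt_add_one _
      rw [heq] at h1 h4
      have hu : (x i - y i) / c < 1 := by
        rw [sub_div]
        linarith
      have hv : (y i - x i) / c < 1 := by
        rw [sub_div]
        linarith
      have hu' : x i - y i < c := by
        have := (div_lt_one hcpos).1 hu
        linarith
      have hv' : y i - x i < c := by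
        have := (div_lt_one hcpos).1 hv
        linarith
      rw [Real.dist_eq, abs_le]
      constructor <;> linarith
    have hdist : dist x y ≤ r := by
      rw [EuclideanSpace.dist_eq]
      have hsum : ∑ i, dist (x i) (y i) ^ 2 ≤ (d:ℝ) * c ^ 2 := by
        calc ∑ i, dist (x i) (y i) ^ 2 ≤ ∑ _i : Fin d, c ^ 2 :=
              Finset.sum_le_sum fun i _ => by
                have h := key i
                have h0 : (0:ℝ) ≤ dist (x i) (y i) := dist_nonneg
                nlinarith
        _ = (d:ℝ) * c ^ 2 := by
            rw [Finset.sum_const, Finset.card_univ, Fintype.card_fin, nsmul_eq_mul]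
      have hdc : (d:ℝ) * c ^ 2 ≤ r ^ 2 := by
        rw [hc, div_pow, ← mul_div_assoc, div_le_iff₀ (by positivity)]
        have hd0 : (0:ℝ) ≤ (d:ℝ) := Nat.cast_nonneg d
        nlinarith [mul_nonneg (sq_nonneg r) (add_nonneg (add_nonneg (sq_nonneg (d:ℝ)) hd0) zero_le_one)]
      calc Real.sqrt (∑ i, dist (x i) (y i) ^ 2) ≤ Real.sqrt (r ^ 2) :=
            Real.sqrt_le_sqrt (le_trans hsum hdc)
      _ = r := Real.sqrt_sq hr.le
    have hx' : x ∈ X ∩ closedBall x r := ⟨hxm.1, mem_closedBall_self hr.le⟩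
    have hy' : y ∈ X ∩ closedBall x r := ⟨hym.1, mem_closedBall.2 (by rwa [dist_comm])⟩
    exact hpack x hx' hy'
  have hmaps : ∀ x ∈ X ∩ closedBall 0 s,
      φ x ∈ (Fintype.piFinset fun _ : Fin d => Finset.Icc (-A) A : Finset (Fin d → ℤ)) := by
    intro x hx
    rw [Fintype.mem_piFinset]
    intro i
    rw [Finset.mem_Icc]
    have hxi : |x i| ≤ s := by
      have h1 := aux_coord_dist_le x 0 i
      have h2 : dist x 0 ≤ s := mem_closedBall.1 hx.2
      have h3 : dist (x i) ((0 : EuclideanSpace ℝ (Fin d)) i) = |x i| := by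
        rw [Real.dist_eq]
        norm_num
      rw [h3] at h1
      linarith
    rw [abs_le] at hxi
    constructor
    · have h5 : -(A:ℝ) ≤ x i / c := by
        have h6 : s / c ≤ (A:ℝ) := by
          rw [hAeq]
          exact_mod_cast Int.le_ceil _
        have h7 : -s / c ≤ x i / c := by
          apply div_le_div_of_nonneg_right ?_ hcpos.le
          · linarith
        rw [neg_div] at h7
        linarith
      have h8 : ((-A : ℤ) : ℝ) ≤ x i / c := by push_cast; linarith
      calc (-A : ℤ) = ⌈((-A : ℤ) : ℝ)⌉ := (Int.ceil_intCast _).symm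
      _ ≤ ⌈x i / c⌉ := Int.ceil_le_ceil h8
    · rw [hAeq]
      apply Int.ceil_le_ceil
      apply div_le_div_of_nonneg_right hxi.2 hcpos.le
  have himg : φ '' (X ∩ closedBall 0 s) ⊆
      ↑(Fintype.piFinset fun _ : Fin d => Finset.Icc (-A) A) := by
    rintro _ ⟨x, hx, rfl⟩
    exact hmaps x hx
  have hfin : (X ∩ closedBall 0 s).Finite :=
    Set.Finite.of_finite_image
      (((Fintype.piFinset fun _ : Fin d => Finset.Icc (-A) A).finite_toSet).subset himg) hinj
  refine ⟨hfin, ?_⟩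
  calc (X ∩ closedBall 0 s).ncard = (φ '' (X ∩ closedBall 0 s)).ncard :=
        (Set.ncard_image_of_injOn hinj).symm
  _ ≤ (↑(Fintype.piFinset fun _ : Fin d => Finset.Icc (-A) A) : Set (Fin d → ℤ)).ncard :=
        Set.ncard_le_ncard himg (Finset.finite_toSet _)
  _ = (Fintype.piFinset fun _ : Fin d => Finset.Icc (-A) A).card := Set.ncard_coe_finset _
  _ = (2 * A + 1).toNat ^ d := by
        rw [Fintype.card_piFinset]
        simp only [Int.card_Icc]
        rw [Finset.prod_const, Finset.card_univ, Fintype.card_fin]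
        congr 1
        congr 1
        ring

set_option maxHeartbeats 1000000 in
theorem stmt4 {d : ℕ} (X : Set (EuclideanSpace ℝ (Fin d))) (r R : ℝ)
    (hX : IsDelone X r R)
    (hLR : ∃ C : ℝ, ∀ T ≥ (1:ℝ), RepBound X T (C * T))
    (hnp : ∀ t : EuclideanSpace ℝ (Fin d), t ≠ 0 → (fun z => z + t) '' X ≠ X) :
    (∃ lam > (0:ℝ), ∃ T0 > (0:ℝ), ∀ T ≥ T0,
      lam * T ^ d ≤ (patchCount X T : ℝ)) ∧
    0 < Filter.liminf (fun T : ℝ => (patchCount X T : ℝ) / T ^ d) Filter.atTop := by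
  obtain ⟨hr, hR, hpack, hcov⟩ := hX
  obtain ⟨C, hC⟩ := hLR
  obtain ⟨x₀, hx₀, -⟩ := hcov 0
  have hC0 : 0 ≤ C := by
    by_contra h
    push_neg at h
    obtain ⟨y, -, hy, -⟩ := hC 1 le_rfl 0 x₀ hx₀
    rw [Metric.closedBall_eq_empty.2 (by linarith)] at hy
    exact hy
  have hC2 : (0:ℝ) < C + 2 := by linarith
  have hd31 : (0:ℝ) < 3 * (d:ℝ) + 1 := by positivity
  set β : ℝ := 1 / (4 * (C + 2) * R * (3 * (d:ℝ) + 1)) with hβ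
  have hβpos : 0 < β := by
    rw [hβ]
    positivity
  set T0 : ℝ := max (C + 2) (4 * (C + 2) * R * (3 * (d:ℝ) + 1)) with hT0
  have hT0pos : 0 < T0 := lt_of_lt_of_le (by linarith) (le_max_left _ _)
  set K : ℝ := 2 * C * ((d:ℝ) + 1) / r + 3 with hK
  have hKnn : 0 ≤ 2 * C * ((d:ℝ) + 1) / r :=
    div_nonneg (mul_nonneg (by linarith) (by positivity)) hr.le
  -- main lower bound
  have hmain : ∀ T, T0 ≤ T → (β * T) ^ d ≤ (patchCount X T : ℝ) := by
    intro T hT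
    have hTC2 : C + 2 ≤ T := le_trans (le_max_left _ _) hT
    have hT1 : (1:ℝ) ≤ T := by linarith
    have hTpos : (0:ℝ) < T := by linarith
    have hT4 : 4 * (C + 2) * R * (3 * (d:ℝ) + 1) ≤ T := le_trans (le_max_right _ _) hT
    set s : ℝ := T / (2 * (C + 2)) with hs
    set q : ℝ := s / (R * (3 * (d:ℝ) + 1)) with hq
    have hq2 : 2 ≤ q := by
      rw [hq, hs, div_div, le_div_iff₀ (by positivity)]
      nlinarith
    have hq0 : 0 ≤ q := by linarith
    set m : ℕ := ⌊q⌋₊ with hm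
    have hm2 : 2 ≤ m := Nat.le_floor (by exact_mod_cast hq2)
    have hm1 : (1:ℝ) ≤ (m:ℝ) := by
      have : 1 ≤ m := le_trans one_le_two hm2
      exact_mod_cast this
    have hmle : (m:ℝ) * (R * (3 * (d:ℝ) + 1)) ≤ s := by
      have h := Nat.floor_le hq0
      rw [hq] at h
      rw [← le_div_iff₀ (by positivity)]
      exact h
    have hβT : β * T ≤ (m:ℝ) := by
      have h1 : q - 1 < (m:ℝ) := Nat.sub_one_lt_floor q
      have h2 : β * T = q / 2 := by
        have hCne : (C + 2) ≠ 0 := by linarith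
        have hRne : R ≠ 0 := by linarith
        have hdne : (3 * (d:ℝ) + 1) ≠ 0 := by linarith
        rw [hβ, hq, hs]
        field_simp
        ring
      linarith
    -- grid points and chosen representatives
    set g : (Fin d → Fin m) → EuclideanSpace ℝ (Fin d) :=
      fun v => (WithLp.equiv 2 (Fin d → ℝ)).symm (fun i => 3 * R * ((v i : ℕ) : ℝ)) with hg
    have hgapp : ∀ v i, g v i = 3 * R * ((v i : ℕ) : ℝ) := fun v i => rfl
    choose f hf using fun v => hcov (g v)
    have hfdist : ∀ v, dist (f v) (g v) ≤ R := fun v => mem_closedBall.1 (hf v).2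
    have hgnorm : ∀ v, ‖g v‖ ≤ 3 * R * m * d := by
      intro v
      rw [EuclideanSpace.norm_eq]
      have hterm : ∀ i : Fin d, ‖g v i‖ ^ 2 ≤ (3 * R * m) ^ 2 := by
        intro i
        have h1 : ((v i : ℕ) : ℝ) ≤ (m:ℝ) := by
          exact_mod_cast le_of_lt (v i).isLt
        have h2 : (0:ℝ) ≤ ((v i : ℕ) : ℝ) := Nat.cast_nonneg _
        rw [hgapp, Real.norm_eq_abs, abs_of_nonneg (by positivity)]
        exact pow_le_pow_left₀ (by positivity) (mul_le_mul_of_nonneg_left h1 (by positivity)) 2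
      have hdd : (d:ℝ) * (3 * R * m) ^ 2 ≤ (3 * R * m * d) ^ 2 ∨ d = 0 := by
        rcases Nat.eq_zero_or_pos d with h | h
        · exact Or.inr h
        · left
          have hd1 : (1:ℝ) ≤ (d:ℝ) := by exact_mod_cast h
          nlinarith [sq_nonneg (3 * R * (m:ℝ))]
      rcases hdd with hdd | hdd
      · calc Real.sqrt (∑ i, ‖g v i‖ ^ 2) ≤ Real.sqrt (∑ _i : Fin d, (3 * R * m) ^ 2) :=
              Real.sqrt_le_sqrt (Finset.sum_le_sum fun i _ => hterm i)
        _ = Real.sqrt ((d:ℝ) * (3 * R * m) ^ 2) := by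
              rw [Finset.sum_const, Finset.card_univ, Fintype.card_fin, nsmul_eq_mul]
        _ ≤ Real.sqrt ((3 * R * m * d) ^ 2) := Real.sqrt_le_sqrt hdd
        _ = 3 * R * m * d := Real.sqrt_sq (by positivity)
      · subst hdd
        simp only [Nat.cast_zero, mul_zero]
        rw [show (∑ i : Fin 0, ‖g v i‖ ^ 2) = 0 from Finset.sum_of_isEmpty _]
        simp
    have hfnorm : ∀ v, ‖f v‖ ≤ s := by
      intro v
      have h2 : ‖f v - g v‖ ≤ R := by
        rw [← dist_eq_norm]
        exact hfdist v
      have h1 : ‖f v‖ ≤ ‖g v‖ + R := by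
        calc ‖f v‖ = ‖g v + (f v - g v)‖ := by congr 1; abel
        _ ≤ ‖g v‖ + ‖f v - g v‖ := norm_add_le _ _
        _ ≤ ‖g v‖ + R := by linarith
      have h3 : 3 * R * m * d + R ≤ (m:ℝ) * (R * (3 * (d:ℝ) + 1)) := by
        nlinarith [mul_nonneg hR.le (sub_nonneg.2 hm1)]
      linarith [hgnorm v]
    have hfinj : Function.Injective f := by
      intro v w hvw
      by_contra hne
      obtain ⟨i, hi⟩ := Function.ne_iff.1 hne
      have h1 : dist (g v i) (g w i) ≤ dist (g v) (g w) := aux_coord_dist_le _ _ i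
      have h2 : 3 * R ≤ dist (g v i) (g w i) := by
        rw [hgapp, hgapp, Real.dist_eq]
        have habs : (1:ℝ) ≤ |((v i : ℕ) : ℝ) - ((w i : ℕ) : ℝ)| := by
          have hne2 : ((v i : ℕ) : ℤ) ≠ ((w i : ℕ) : ℤ) := by
            intro hcon
            apply hi
            have : (v i : ℕ) = (w i : ℕ) := by exact_mod_cast hcon
            exact Fin.ext this
          have h := Int.one_le_abs (sub_ne_zero.2 hne2)
          have : ((1:ℤ) : ℝ) ≤ |(((v i : ℕ) : ℤ) : ℝ) - (((w i : ℕ) : ℤ) : ℝ)| := by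
            rw [← Int.cast_sub, ← Int.cast_abs]
            exact_mod_cast h
          push_cast at this
          exact this
        have heq : 3 * R * ((v i : ℕ) : ℝ) - 3 * R * ((w i : ℕ) : ℝ)
            = 3 * R * (((v i : ℕ) : ℝ) - ((w i : ℕ) : ℝ)) := by ring
        rw [heq, abs_mul, abs_of_nonneg (by positivity : (0:ℝ) ≤ 3 * R)]
        calc 3 * R = 3 * R * 1 := by ring
        _ ≤ 3 * R * |((v i : ℕ) : ℝ) - ((w i : ℕ) : ℝ)| :=
            mul_le_mul_of_nonneg_left habs (by positivity)
      have h3 : dist (g v) (g w) ≤ R + R := by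
        calc dist (g v) (g w) ≤ dist (g v) (f v) + dist (f v) (g w) := dist_triangle _ _ _
        _ = dist (g v) (f v) + dist (f w) (g w) := by rw [hvw]
        _ ≤ R + R := by
            have ha := hfdist v
            have hb := hfdist w
            rw [dist_comm (g v) (f v)]
            linarith
      linarith
    have hpatchinj : Function.Injective (fun v => patch X (f v) T) := by
      intro v w h
      apply hfinj
      exact aux_patch_inj hC hC0 hnp hTC2 (hf v).1 (hf w).1 (hfnorm v) (hfnorm w) h
    -- the set of patches
    have hsub : {P | ∃ x ∈ X, P = patch X x T} ⊆
        (fun y => patch X y T) '' (X ∩ closedBall 0 (C * T)) := by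
      rintro Q ⟨x, hx, rfl⟩
      obtain ⟨y, hyX, hyb, hpq⟩ := hC T hT1 0 x hx
      refine ⟨y, ⟨hyX, hyb⟩, ?_⟩
      show patch X y T = patch X x T
      exact hpq
    have hball := aux_count hr hpack (C * T)
    have hPfin : {P | ∃ x ∈ X, P = patch X x T}.Finite := ((hball.1).image _).subset hsub
    have hrange : Set.range (fun v => patch X (f v) T) ⊆ {P | ∃ x ∈ X, P = patch X x T} := by
      rintro Q ⟨v, rfl⟩
      exact ⟨f v, (hf v).1, rfl⟩
    have hcard : m ^ d ≤ patchCount X T := by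
      rw [patchCount]
      calc m ^ d = Nat.card (Fin d → Fin m) := by
            rw [Nat.card_eq_fintype_card, Fintype.card_fun, Fintype.card_fin, Fintype.card_fin]
      _ = (Set.univ : Set (Fin d → Fin m)).ncard := (Set.ncard_univ _).symm
      _ = ((fun v => patch X (f v) T) '' Set.univ).ncard :=
            (Set.ncard_image_of_injective _ hpatchinj).symm
      _ = (Set.range fun v => patch X (f v) T).ncard := by rw [Set.image_univ]
      _ ≤ _ := Set.ncard_le_ncard hrange hPfin
    calc (β * T) ^ d ≤ (m:ℝ) ^ d := pow_le_pow_left₀ (by positivity) hβT d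
    _ = ((m ^ d : ℕ) : ℝ) := by push_cast; ring
    _ ≤ (patchCount X T : ℝ) := Nat.cast_le.2 hcard
  -- upper bound
  have hupper : ∀ T, (1:ℝ) ≤ T → (patchCount X T : ℝ) ≤ K ^ d * T ^ d := by
    intro T hT1
    have hTpos : (0:ℝ) < T := by linarith
    obtain ⟨hfin, hcardb⟩ := aux_count hr hpack (C * T)
    have hsub : {P | ∃ x ∈ X, P = patch X x T} ⊆
        (fun y => patch X y T) '' (X ∩ closedBall 0 (C * T)) := by
      rintro Q ⟨x, hx, rfl⟩
      obtain ⟨y, hyX, hyb, hpq⟩ := hC T hT1 0 x hx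
      refine ⟨y, ⟨hyX, hyb⟩, ?_⟩
      show patch X y T = patch X x T
      exact hpq
    have h1 : patchCount X T ≤ (X ∩ closedBall 0 (C * T)).ncard := by
      calc patchCount X T
          ≤ ((fun y => patch X y T) '' (X ∩ closedBall 0 (C * T))).ncard :=
            Set.ncard_le_ncard hsub (hfin.image _)
      _ ≤ _ := Set.ncard_image_le hfin
    set A : ℤ := ⌈C * T * ((d:ℝ) + 1) / r⌉ with hA
    have hA0 : (0:ℤ) ≤ A := Int.ceil_nonneg (by positivity)
    have h2 : (((2 * A + 1).toNat : ℕ) : ℝ) ≤ K * T := by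
      have h3 : (((2 * A + 1).toNat : ℕ) : ℝ) = 2 * (A:ℝ) + 1 := by
        have h3a : ((2 * A + 1).toNat : ℤ) = 2 * A + 1 := Int.toNat_of_nonneg (by omega)
        have h3b : (((2 * A + 1).toNat : ℤ) : ℝ) = ((2 * A + 1 : ℤ) : ℝ) := by rw [h3a]
        push_cast at h3b
        rw [h3b]
      have h4 : (A:ℝ) < C * T * ((d:ℝ) + 1) / r + 1 := Int.ceil_lt_add_one _
      rw [h3, hK]
      have h5 : C * T * ((d:ℝ) + 1) / r = (2 * C * ((d:ℝ) + 1) / r) * T / 2 := by ring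
      nlinarith [mul_le_mul_of_nonneg_left hT1 hKnn]
    calc (patchCount X T : ℝ) ≤ (((2 * A + 1).toNat ^ d : ℕ) : ℝ) := by
          exact_mod_cast le_trans h1 hcardb
    _ = (((2 * A + 1).toNat : ℕ) : ℝ) ^ d := by push_cast; ring
    _ ≤ (K * T) ^ d := pow_le_pow_left₀ (Nat.cast_nonneg _) h2 d
    _ = K ^ d * T ^ d := mul_pow _ _ _
  constructor
  · refine ⟨β ^ d, pow_pos hβpos d, T0, hT0pos, fun T hT => ?_⟩
    rw [← mul_pow]
    exact hmain T hT
  · have hbd : Filter.IsCoboundedUnder (· ≥ ·) Filter.atTop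
        (fun T : ℝ => (patchCount X T : ℝ) / T ^ d) := by
      refine Filter.isCoboundedUnder_ge_of_eventually_le Filter.atTop (x := K ^ d) ?_
      filter_upwards [Filter.eventually_ge_atTop (1:ℝ)] with T hT
      have hTpos : (0:ℝ) < T := by linarith
      rw [div_le_iff₀ (by positivity)]
      exact hupper T hT
    have hev : ∀ᶠ T in Filter.atTop, β ^ d ≤ (patchCount X T : ℝ) / T ^ d := by
      filter_upwards [Filter.eventually_ge_atTop T0] with T hT
      have hTpos : (0:ℝ) < T := lt_of_lt_of_le hT0pos hT
      rw [le_div_iff₀ (by positivity)]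
      calc β ^ d * T ^ d = (β * T) ^ d := (mul_pow _ _ _).symm
      _ ≤ _ := hmain T hT
    calc (0:ℝ) < β ^ d := pow_pos hβpos d
    _ ≤ _ := Filter.le_liminf_of_le hbd hev
end
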